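/- For every complex s with Re(s) > 1, ∫_{0}^{1/2} (1 + f(1/x)) · x^{s-1} dx = 0, where f(x) = ∑_{k≥1} μ(k) ν(x/k). -/

import Mathlib

/-!
Since `ν t = ⌊t⌋ - 2 ⌊t/2⌋` and `∑_{k ≤ y} μ(k) ⌊y/k⌋ = 1` for every `y ≥ 1`, we get
`f x = 1 - 2 = -1` for all `x ≥ 2`. Hence `1 + f(1/x)` vanishes on `(0, 1/2]`, and so does the
integrand.
-/

open MeasureTheory

noncomputable def nu (t : ℝ) : ℝ := Int.fract (t/2) + 1/2 - Int.fract (t/2 + 1/2)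

noncomputable def f (x : ℝ) : ℝ :=
  ∑ k ∈ Finset.Icc 1 ⌊x⌋₊, (ArithmeticFunction.moebius k : ℝ) * nu (x / k)

open Finset ArithmeticFunction
open scoped ArithmeticFunction.Moebius ArithmeticFunction.zeta

lemma sum_Icc_moebius_mul_div_eq_one {M N : ℕ} (hM : 1 ≤ M) (hMN : M ≤ N) :
    ∑ k ∈ Icc 1 N, (μ k : ℝ) * (M / k : ℕ) = 1 := by
  have htrunc : ∑ k ∈ Icc 1 N, (μ k : ℝ) * (M / k : ℕ)
      = ∑ k ∈ Icc 1 M, (μ k : ℝ) * (M / k : ℕ) := by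
    refine (sum_subset (Icc_subset_Icc_right hMN) fun k hk hkM => ?_).symm
    simp only [mem_Icc, not_and, not_le] at hk hkM
    simp [Nat.div_eq_of_lt (hkM hk.1)]
  have hmul := sum_Ioc_mul_zeta_eq_sum (μ : ArithmeticFunction ℝ) M
  rw [coe_moebius_mul_coe_zeta] at hmul
  simp only [intCoe_apply, one_apply] at hmul
  rw [htrunc, show Icc 1 M = Ioc 0 M from Icc_add_one_left_eq_Ioc 0 M, ← hmul, sum_ite_eq',
    if_pos (by simpa using hM)]

lemma sum_Icc_moebius_mul_floor_div_eq_one {y : ℝ} (hy : 1 ≤ y) {N : ℕ} (hyN : ⌊y⌋₊ ≤ N) :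
    ∑ k ∈ Icc 1 N, (μ k : ℝ) * ⌊y / k⌋ = 1 := by
  have hfloor : ∀ k : ℕ, (⌊y / k⌋ : ℝ) = (⌊y⌋₊ / k : ℕ) := fun k => by
    rw [← Int.natCast_floor_eq_floor (by positivity), Nat.floor_div_natCast, Int.cast_natCast]
  simp only [hfloor]
  exact sum_Icc_moebius_mul_div_eq_one (Nat.le_floor (by exact_mod_cast hy)) hyN

lemma nu_eq_floor_sub_two_mul_floor_half (t : ℝ) : nu t = ⌊t⌋ - 2 * ⌊t / 2⌋ := by
  have hround : ⌊t / 2 + 1 / 2⌋ = (⌊t⌋ + 1) / 2 := by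
    rw [← round_eq, round_eq_div, mul_div_cancel₀ t two_ne_zero]
  have hhalf : ⌊t / 2⌋ = ⌊t⌋ / 2 := by exact_mod_cast Int.floor_div_natCast t 2
  have hparity : (⌊t⌋ + 1) / 2 = ⌊t⌋ - ⌊t⌋ / 2 := by omega
  rw [nu, Int.fract, Int.fract, hround, hparity, hhalf]
  push_cast
  ring

lemma f_eq_neg_one {x : ℝ} (hx : 2 ≤ x) : f x = -1 := by
  have hsplit : ∀ k ∈ Icc 1 ⌊x⌋₊, (μ k : ℝ) * nu (x / k)
      = (μ k : ℝ) * ⌊x / k⌋ - 2 * ((μ k : ℝ) * ⌊x / 2 / k⌋) := fun k _ => by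
    rw [nu_eq_floor_sub_two_mul_floor_half, div_right_comm x (k : ℝ) 2]
    ring
  rw [f, sum_congr rfl hsplit, sum_sub_distrib, ← mul_sum,
    sum_Icc_moebius_mul_floor_div_eq_one (by linarith) le_rfl,
    sum_Icc_moebius_mul_floor_div_eq_one (by linarith) (Nat.floor_le_floor (by linarith))]
  norm_num

theorem stmt11 : ∀ s : ℂ, 1 < s.re →
    ∫ x in (0:ℝ)..(1/2), (1 + (f (1/x) : ℂ)) * (x:ℂ)^(s - 1) = 0 := by
  intro s _
  have hzero : ∀ x ∈ Set.uIoc (0:ℝ) (1/2), (1 + (f (1/x) : ℂ)) * (x:ℂ)^(s - 1) = 0 := by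
    intro x hx
    rw [Set.uIoc_of_le (by norm_num)] at hx
    have h2x : 2 ≤ 1 / x := by rw [le_div_iff₀ hx.1]; linarith [hx.2]
    rw [f_eq_neg_one h2x]
    simp
  rw [intervalIntegral.integral_congr_ae (g := 0) (ae_of_all _ hzero)]
  simp
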